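/- arXiv:1702.07421 — 6 statements merged into one kernel-verified Lean document; each statement's English description precedes it below -/
import Mathlib

section
/- Let p ≥ 1 be a real number. In the block setup, let H be the (n+m)×n matrix whose top n×n block is the identity and whose bottom m×n block is S, and let ν_p(H) = inf{ ‖H·v‖_p : v ∈ ℝⁿ, ‖v‖_p = 1 }. Suppose μ_F and μ_{F_r} are real numbers such that (‖I_{n+m} + h·F‖_p − 1)/h → μ_F and (‖I_n + h·F_r‖_p − 1)/h → μ_{F_r} as h → 0⁺, where ‖·‖_p denotes the operator norm of a matrix induced by the ℓ^p vector norm. If μ_F < 0, then μ_{F_r} ≤ μ_F · ν_p(H). -/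
open Matrix Filter Topology

/-- The ℓ^p norm of a real vector: `(∑ i, |x i| ^ p) ^ (1/p)`. -/
noncomputable def lpNorm {k : Type*} [Fintype k] (p : ℝ) (x : k → ℝ) : ℝ :=
  (∑ i, |x i| ^ p) ^ (1 / p)

/-- The operator norm of a square matrix induced by the ℓ^p vector norm. -/
noncomputable def matOpNorm {k : Type*} [Fintype k] (p : ℝ) (M : Matrix k k ℝ) : ℝ :=
  sSup ((fun x => lpNorm p (M.mulVec x)) '' {x | lpNorm p x = 1})

/-- `ν_p(H) = inf { ‖H v‖_p : ‖v‖_p = 1 }`. -/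
noncomputable def nuP {k l : Type*} [Fintype k] [Fintype l] (p : ℝ)
    (H : Matrix k l ℝ) : ℝ :=
  sInf ((fun v => lpNorm p (H.mulVec v)) '' {v | lpNorm p v = 1})

namespace MyAux

variable {k : Type*} [Fintype k] {p : ℝ}

/-- the p-th power sum -/
noncomputable def Tp (p : ℝ) (x : k → ℝ) : ℝ := ∑ i, |x i| ^ p

lemma Tp_nonneg (x : k → ℝ) : 0 ≤ Tp p x :=
  Finset.sum_nonneg fun i _ => Real.rpow_nonneg (abs_nonneg _) _

lemma lpNorm_def (x : k → ℝ) : lpNorm p x = (Tp p x) ^ (1/p) := rfl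

lemma lpNorm_nonneg (x : k → ℝ) : 0 ≤ lpNorm p x :=
  Real.rpow_nonneg (Tp_nonneg x) _

lemma lpNorm_rpow (hp : 1 ≤ p) (x : k → ℝ) : (lpNorm p x) ^ p = Tp p x := by
  rw [lpNorm_def, one_div, Real.rpow_inv_rpow (Tp_nonneg x) (by linarith)]

lemma Tp_eq_one (hp : 1 ≤ p) {x : k → ℝ} (hx : lpNorm p x = 1) : Tp p x = 1 := by
  rw [← lpNorm_rpow hp x, hx, Real.one_rpow]

lemma lpNorm_cont (hp : 1 ≤ p) : Continuous (lpNorm (k := k) p) := by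
  have h1 : Continuous fun x : k → ℝ => ∑ i, |x i| ^ p :=
    continuous_finset_sum _ fun i _ =>
      ((continuous_apply i).abs).rpow_const fun x => Or.inr (by linarith)
  exact h1.rpow_const fun x => Or.inr (by positivity)

lemma sphere_isCompact (hp : 1 ≤ p) : IsCompact {x : k → ℝ | lpNorm p x = 1} := by
  apply Metric.isCompact_of_isClosed_isBounded
  · exact isClosed_eq (lpNorm_cont hp) continuous_const
  · apply Bornology.IsBounded.subset (Metric.isBounded_closedBall (x := (0 : k → ℝ)) (r := 1))
    intro x hx
    have hT : Tp p x = 1 := Tp_eq_one hp hx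
    have habs : ∀ i, |x i| ≤ 1 := by
      intro i
      by_contra hcon
      push_neg at hcon
      have h1 : (1:ℝ) < |x i| ^ p := by
        calc (1:ℝ) = 1 ^ p := (Real.one_rpow p).symm
        _ < |x i| ^ p := Real.rpow_lt_rpow zero_le_one hcon (by linarith)
      have h2 : |x i| ^ p ≤ Tp p x :=
        Finset.single_le_sum (f := fun i => |x i| ^ p)
          (fun i _ => Real.rpow_nonneg (abs_nonneg _) _) (Finset.mem_univ i)
      rw [hT] at h2; linarith
    rw [Metric.mem_closedBall]
    rw [dist_pi_le_iff zero_le_one]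
    intro i
    simpa [Real.dist_eq] using habs i

lemma sphere_nonempty (hp : 1 ≤ p) [Nonempty k] :
    ({x : k → ℝ | lpNorm p x = 1}).Nonempty := by
  classical
  obtain ⟨i0⟩ := ‹Nonempty k›
  refine ⟨Pi.single i0 1, ?_⟩
  have hT : Tp p (Pi.single i0 (1:ℝ)) = 1 := by
    unfold Tp
    rw [Finset.sum_eq_single i0]
    · simp
    · intro b _ hb
      rw [Pi.single_eq_of_ne hb]
      simp
      exact Real.zero_rpow (by linarith)
    · simp
  rw [Set.mem_setOf_eq, lpNorm_def, hT, Real.one_rpow]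

lemma mulVec_cont (M : Matrix k k ℝ) : Continuous fun x : k → ℝ => M.mulVec x := by
  apply continuous_pi
  intro i
  exact continuous_finset_sum _ fun j _ => continuous_const.mul (continuous_apply j)

lemma matOpNorm_bddAbove (hp : 1 ≤ p) (M : Matrix k k ℝ) :
    BddAbove ((fun x => lpNorm p (M.mulVec x)) '' {x | lpNorm p x = 1}) :=
  ((sphere_isCompact hp).image ((lpNorm_cont hp).comp (mulVec_cont M))).bddAbove

lemma le_matOpNorm (hp : 1 ≤ p) (M : Matrix k k ℝ) {x : k → ℝ} (hx : lpNorm p x = 1) :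
    lpNorm p (M.mulVec x) ≤ matOpNorm p M :=
  le_csSup (matOpNorm_bddAbove hp M) ⟨x, hx, rfl⟩

lemma matOpNorm_le (hp : 1 ≤ p) [Nonempty k] (M : Matrix k k ℝ) {b : ℝ}
    (hb : ∀ x : k → ℝ, lpNorm p x = 1 → lpNorm p (M.mulVec x) ≤ b) :
    matOpNorm p M ≤ b := by
  apply csSup_le ((sphere_nonempty hp).image _)
  rintro y ⟨x, hx, rfl⟩
  exact hb x hx

lemma matOpNorm_nonneg (hp : 1 ≤ p) [Nonempty k] (M : Matrix k k ℝ) :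
    0 ≤ matOpNorm p M := by
  obtain ⟨x, hx⟩ := sphere_nonempty (k := k) hp
  exact le_trans (lpNorm_nonneg _) (le_matOpNorm hp M hx)

lemma lpNorm_smul (hp : 1 ≤ p) (c : ℝ) (x : k → ℝ) :
    lpNorm p (c • x) = |c| * lpNorm p x := by
  have hp0 : p ≠ 0 := by linarith
  have hT : Tp p (c • x) = |c| ^ p * Tp p x := by
    unfold Tp
    rw [Finset.mul_sum]
    refine Finset.sum_congr rfl fun i _ => ?_
    rw [Pi.smul_apply, smul_eq_mul, abs_mul, Real.mul_rpow (abs_nonneg _) (abs_nonneg _)]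
  rw [lpNorm_def, hT, Real.mul_rpow (Real.rpow_nonneg (abs_nonneg _) _) (Tp_nonneg x),
    one_div, Real.rpow_rpow_inv (abs_nonneg _) hp0, lpNorm_def, one_div]

lemma lpNorm_mulVec_le (hp : 1 ≤ p) (M : Matrix k k ℝ) (z : k → ℝ)
    (hz : lpNorm p z ≠ 0) :
    lpNorm p (M.mulVec z) ≤ matOpNorm p M * lpNorm p z := by
  have hzpos : 0 < lpNorm p z := lt_of_le_of_ne (lpNorm_nonneg z) (Ne.symm hz)
  set c := (lpNorm p z)⁻¹ with hc
  have hcpos : 0 < c := inv_pos.mpr hzpos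
  have hunit : lpNorm p (c • z) = 1 := by
    rw [lpNorm_smul hp, abs_of_pos hcpos, hc, inv_mul_cancel₀ hz]
  have := le_matOpNorm hp M hunit
  rw [Matrix.mulVec_smul, lpNorm_smul hp, abs_of_pos hcpos] at this
  calc lpNorm p (M.mulVec z) = (c * lpNorm p (M.mulVec z)) * lpNorm p z := by
        rw [mul_comm c, mul_assoc, hc, inv_mul_cancel₀ hz, mul_one]
  _ ≤ matOpNorm p M * lpNorm p z :=
      mul_le_mul_of_nonneg_right this (le_of_lt hzpos)

/-- limit lemma: if (f h - 1)/h → L then ((f h)^p - 1)/h → p * L along 𝓝[>] 0 -/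
lemma rpow_slope_tendsto (hp : 1 ≤ p) {f : ℝ → ℝ} {L : ℝ}
    (hf : Tendsto (fun h => (f h - 1) / h) (𝓝[>] (0:ℝ)) (𝓝 L)) :
    Tendsto (fun h => ((f h) ^ p - 1) / h) (𝓝[>] (0:ℝ)) (𝓝 (p * L)) := by
  have hid : Tendsto (fun h : ℝ => h) (𝓝[>] (0:ℝ)) (𝓝 0) :=
    tendsto_id.mono_left nhdsWithin_le_nhds
  have hf1 : Tendsto f (𝓝[>] (0:ℝ)) (𝓝 1) := by
    have h2 : Tendsto (fun h : ℝ => (f h - 1) / h * h + 1) (𝓝[>] (0:ℝ)) (𝓝 (L * 0 + 1)) :=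
      (hf.mul hid).add tendsto_const_nhds
    rw [mul_zero, zero_add] at h2
    apply h2.congr'
    filter_upwards [self_mem_nhdsWithin] with h hh
    rw [div_mul_cancel₀ _ (ne_of_gt hh), sub_add_cancel]
  set φ : ℝ → ℝ := fun y => if y = 1 then p else (y ^ p - 1) / (y - 1) with hφdef
  have hkey : ∀ y : ℝ, y ^ p - 1 = φ y * (y - 1) := by
    intro y
    by_cases hy : y = 1
    · simp [hφdef, hy, Real.one_rpow]
    · rw [hφdef]
      simp only [if_neg hy]
      rw [div_mul_cancel₀ _ (sub_ne_zero_of_ne hy)]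
  have hφtend : Tendsto φ (𝓝 (1:ℝ)) (𝓝 p) := by
    rw [← nhdsNE_sup_pure (1:ℝ)]
    rw [Filter.tendsto_sup]
    constructor
    · have hder : HasDerivAt (fun y : ℝ => y ^ p) (p * (1:ℝ) ^ (p - 1)) 1 :=
        Real.hasDerivAt_rpow_const (Or.inr hp)
      rw [Real.one_rpow, mul_one] at hder
      have hslope := hasDerivAt_iff_tendsto_slope.mp hder
      apply hslope.congr'
      filter_upwards [self_mem_nhdsWithin] with y hy
      have hy1 : y ≠ 1 := hy
      rw [slope_def_field, hφdef]
      simp only [if_neg hy1]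
      rw [Real.one_rpow]
    · have : φ 1 = p := by simp [hφdef]
      rw [← this]
      exact tendsto_pure_nhds φ 1
  have heq : (fun h => ((f h) ^ p - 1) / h) = fun h => φ (f h) * ((f h - 1) / h) := by
    funext h
    rw [hkey (f h), mul_div_assoc]
  rw [heq]
  exact (hφtend.comp hf1).mul hf

end MyAux

open MyAux in
theorem stmt2 (p : ℝ) (hp : 1 ≤ p) (n m : ℕ) (hn : 0 < n) (hm : 0 < m)
    (B : Matrix (Fin n) (Fin m) ℝ) (C : Matrix (Fin m) (Fin n) ℝ)
    (D : Matrix (Fin m) (Fin m) ℝ) (hD : IsUnit D.det)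
    (θ : Matrix (Fin n) (Fin n) ℝ) (hθ : IsUnit θ.det)
    (ρ : Matrix (Fin m) (Fin m) ℝ) (hρ : IsUnit ρ.det)
    (Q : Matrix (Fin m) (Fin m) ℝ) (R : Matrix (Fin m) (Fin n) ℝ)
    (Fr : Matrix (Fin n) (Fin n) ℝ)
    -- the matrix S = ρ D⁻¹ C θ⁻¹ and the generalized unreduced Jacobian F
    (S : Matrix (Fin m) (Fin n) ℝ) (hS : S = ρ * D⁻¹ * C * θ⁻¹)
    (F : Matrix (Fin n ⊕ Fin m) (Fin n ⊕ Fin m) ℝ)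
    (hFdef : F = Matrix.fromBlocks (Fr + θ * Rᵀ * C * θ⁻¹) (θ * Rᵀ * D * ρ⁻¹)
      (Qᵀ * C * θ⁻¹) (Qᵀ * D * ρ⁻¹))
    -- matrix measures as one-sided limits
    (μF μFr : ℝ)
    (hμF : Tendsto (fun h : ℝ => (matOpNorm p (1 + h • F) - 1) / h) (𝓝[>] 0) (𝓝 μF))
    (hμFr : Tendsto (fun h : ℝ => (matOpNorm p (1 + h • Fr) - 1) / h) (𝓝[>] 0) (𝓝 μFr))
    (hneg : μF < 0) :
    μFr ≤ μF * nuP p (Matrix.fromRows (1 : Matrix (Fin n) (Fin n) ℝ) S) := by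

  haveI : Nonempty (Fin n) := ⟨⟨0, hn⟩⟩
  haveI : Nonempty (Fin m) := ⟨⟨0, hm⟩⟩
  have hp0 : (0:ℝ) < p := lt_of_lt_of_le one_pos hp
  have hp0' : p ≠ 0 := ne_of_gt hp0
  set H := Matrix.fromRows (1 : Matrix (Fin n) (Fin n) ℝ) S with hH
  set ν := nuP p H with hν
  -- block matrix identities
  have hB1 : (θ * Rᵀ * D * ρ⁻¹) * S = θ * Rᵀ * C * θ⁻¹ := by
    rw [hS]
    simp only [Matrix.mul_assoc]
    rw [Matrix.nonsing_inv_mul_cancel_left _ _ hρ, Matrix.mul_nonsing_inv_cancel_left _ _ hD]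
  have hB2 : (Qᵀ * D * ρ⁻¹) * S = Qᵀ * C * θ⁻¹ := by
    rw [hS]
    simp only [Matrix.mul_assoc]
    rw [Matrix.nonsing_inv_mul_cancel_left _ _ hρ, Matrix.mul_nonsing_inv_cancel_left _ _ hD]
  -- key vector identity
  have hFz : ∀ v : Fin n → ℝ,
      F.mulVec (Sum.elim v (-(S.mulVec v))) = Sum.elim (Fr.mulVec v) 0 := by
    intro v
    rw [hFdef, Matrix.fromBlocks_mulVec]
    have h1 : (Sum.elim v (-(S.mulVec v))) ∘ Sum.inl = v := Sum.elim_comp_inl _ _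
    have h2 : (Sum.elim v (-(S.mulVec v))) ∘ Sum.inr = -(S.mulVec v) := Sum.elim_comp_inr _ _
    rw [h1, h2]
    rw [Matrix.mulVec_neg, Matrix.mulVec_mulVec, hB1,
      Matrix.mulVec_neg, Matrix.mulVec_mulVec, hB2, Matrix.add_mulVec]
    funext i
    cases i <;> simp
  have hz_mul : ∀ (h : ℝ) (v : Fin n → ℝ),
      (1 + h • F).mulVec (Sum.elim v (-(S.mulVec v)))
        = Sum.elim ((1 + h • Fr).mulVec v) (-(S.mulVec v)) := by
    intro h v
    rw [Matrix.add_mulVec, Matrix.one_mulVec, Matrix.smul_mulVec, hFz,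
      Matrix.add_mulVec, Matrix.one_mulVec, Matrix.smul_mulVec]
    funext i
    cases i <;> simp
  -- Tp over sum types
  have hTp_sum : ∀ (x : Fin n → ℝ) (y : Fin m → ℝ),
      Tp p (Sum.elim x y) = Tp p x + Tp p y := by
    intro x y
    unfold MyAux.Tp
    rw [Fintype.sum_sum_type]
    simp
  have hTneg : ∀ y : Fin m → ℝ, Tp p (-y) = Tp p y := by
    intro y; unfold MyAux.Tp; simp
  have hHmul : ∀ v : Fin n → ℝ, H.mulVec v = Sum.elim v (S.mulVec v) := by
    intro v
    rw [hH, Matrix.fromRows_mulVec, Matrix.one_mulVec]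
  -- nu facts
  have hν1 : (1:ℝ) ≤ ν := by
    apply le_csInf ((MyAux.sphere_nonempty hp).image _)
    rintro y ⟨v, hv, rfl⟩
    have hTv : Tp p v = 1 := Tp_eq_one hp hv
    have hT : Tp p (H.mulVec v) = 1 + Tp p (S.mulVec v) := by
      rw [hHmul, hTp_sum, hTv]
    calc (1:ℝ) = 1 ^ (1/p) := (Real.one_rpow _).symm
    _ ≤ (Tp p (H.mulVec v)) ^ (1/p) :=
        Real.rpow_le_rpow zero_le_one
          (by rw [hT]; linarith [Tp_nonneg (p := p) (S.mulVec v)]) (by positivity)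
    _ = lpNorm p (H.mulVec v) := rfl
  have hν0 : (0:ℝ) ≤ ν := le_trans zero_le_one hν1
  have hνp : ∀ v : Fin n → ℝ, lpNorm p v = 1 → ν ^ p ≤ 1 + Tp p (S.mulVec v) := by
    intro v hv
    have hTv : Tp p v = 1 := Tp_eq_one hp hv
    have h1 : ν ≤ lpNorm p (H.mulVec v) :=
      csInf_le ⟨0, by rintro y ⟨w, _, rfl⟩; exact lpNorm_nonneg _⟩ ⟨v, hv, rfl⟩
    have h2 := Real.rpow_le_rpow hν0 h1 (le_of_lt hp0)
    rw [lpNorm_rpow hp, hHmul, hTp_sum, hTv] at h2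
    exact h2
  -- main quantitative claim
  have key : ∀ h : ℝ, 0 < h → matOpNorm p (1 + h • F) ≤ 1 →
      (matOpNorm p (1 + h • Fr)) ^ p - 1
        ≤ ν ^ p * ((matOpNorm p (1 + h • F)) ^ p - 1) := by
    intro h hh hA1
    set A := matOpNorm p (1 + h • F) with hA
    have hA0 : 0 ≤ A := matOpNorm_nonneg hp _
    have hAp1 : A ^ p ≤ 1 := Real.rpow_le_one hA0 hA1 (le_of_lt hp0)
    set β := 1 + ν ^ p * (A ^ p - 1) with hβ
    have hstep : ∀ v : Fin n → ℝ, lpNorm p v = 1 →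
        Tp p ((1 + h • Fr).mulVec v) ≤ β := by
      intro v hv
      have hTv : Tp p v = 1 := Tp_eq_one hp hv
      have hTz : Tp p (Sum.elim v (-(S.mulVec v)))
          = 1 + Tp p (S.mulVec v) := by
        rw [hTp_sum, hTv, hTneg]
      have hTz1 : 1 ≤ Tp p (Sum.elim v (-(S.mulVec v))) := by
        rw [hTz]; linarith [Tp_nonneg (p := p) (S.mulVec v)]
      have hNz1 : 1 ≤ lpNorm p (Sum.elim v (-(S.mulVec v))) := by
        calc (1:ℝ) = 1 ^ (1/p) := (Real.one_rpow _).symm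
        _ ≤ (Tp p (Sum.elim v (-(S.mulVec v)))) ^ (1/p) :=
            Real.rpow_le_rpow zero_le_one hTz1 (by positivity)
        _ = _ := rfl
      have hNzne : lpNorm p (Sum.elim v (-(S.mulVec v))) ≠ 0 := by
        intro hcon; rw [hcon] at hNz1; linarith
      have hle := lpNorm_mulVec_le hp (1 + h • F) _ hNzne
      have hle2 := Real.rpow_le_rpow (lpNorm_nonneg _) hle (le_of_lt hp0)
      rw [lpNorm_rpow hp, Real.mul_rpow hA0 (lpNorm_nonneg _), lpNorm_rpow hp] at hle2
      rw [hz_mul h v, hTp_sum, hTneg, hTz] at hle2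
      -- hle2 : Tp p ((1+h•Fr)*ᵥv) + Tp p (S*ᵥv) ≤ A^p * (1 + Tp p (S*ᵥv))
      have hSv := hνp v hv
      have hprod : (Tp p (S.mulVec v) - (ν ^ p - 1)) * (A ^ p - 1) ≤ 0 :=
        mul_nonpos_of_nonneg_of_nonpos (by linarith) (by linarith)
      rw [hβ]
      nlinarith [hle2, hprod]
    obtain ⟨v0, hv0⟩ := MyAux.sphere_nonempty (k := Fin n) hp
    have hβ0 : 0 ≤ β := le_trans (Tp_nonneg _) (hstep v0 hv0)
    have hBrn : matOpNorm p (1 + h • Fr) ≤ β ^ (1/p) := by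
      apply matOpNorm_le hp
      intro v hv
      calc lpNorm p ((1 + h • Fr).mulVec v)
          = (Tp p ((1 + h • Fr).mulVec v)) ^ (1/p) := rfl
      _ ≤ β ^ (1/p) := Real.rpow_le_rpow (Tp_nonneg _) (hstep v hv) (by positivity)
    have hfinal : (matOpNorm p (1 + h • Fr)) ^ p ≤ β := by
      have := Real.rpow_le_rpow (matOpNorm_nonneg hp _) hBrn (le_of_lt hp0)
      rwa [one_div, Real.rpow_inv_rpow hβ0 hp0'] at this
    rw [hβ] at hfinal
    linarith
  -- eventual inequality
  have hev : ∀ᶠ h in 𝓝[>] (0:ℝ),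
      ((matOpNorm p (1 + h • Fr)) ^ p - 1) / h
        ≤ ν ^ p * (((matOpNorm p (1 + h • F)) ^ p - 1) / h) := by
    have h1 : ∀ᶠ h in 𝓝[>] (0:ℝ), (matOpNorm p (1 + h • F) - 1) / h < 0 :=
      hμF.eventually_lt_const hneg
    filter_upwards [h1, self_mem_nhdsWithin] with h hlt hh
    have hh0 : (0:ℝ) < h := hh
    have hA1 : matOpNorm p (1 + h • F) ≤ 1 := by
      have h2 := mul_neg_of_neg_of_pos hlt hh0
      rw [div_mul_cancel₀ _ (ne_of_gt hh0)] at h2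
      linarith
    have h3 := key h hh0 hA1
    calc ((matOpNorm p (1 + h • Fr)) ^ p - 1) / h
        ≤ (ν ^ p * ((matOpNorm p (1 + h • F)) ^ p - 1)) / h := by gcongr
    _ = ν ^ p * (((matOpNorm p (1 + h • F)) ^ p - 1) / h) := mul_div_assoc _ _ _
  have t1 := rpow_slope_tendsto hp hμFr
  have t2 := (rpow_slope_tendsto hp hμF).const_mul (ν ^ p)
  have hfin : p * μFr ≤ ν ^ p * (p * μF) := le_of_tendsto_of_tendsto t1 t2 hev
  have h2 : μFr ≤ ν ^ p * μF := by
    have hfin' : p * μFr ≤ p * (ν ^ p * μF) := by nlinarith [hfin]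
    exact le_of_mul_le_mul_left hfin' hp0
  have hνν : ν ≤ ν ^ p := by
    calc ν = ν ^ (1:ℝ) := (Real.rpow_one ν).symm
    _ ≤ ν ^ p := Real.rpow_le_rpow_of_exponent_le hν1 hp
  have h3 : μF * ν ^ p ≤ μF * ν := mul_le_mul_of_nonpos_left hνν (le_of_lt hneg)
  nlinarith [h2, h3]
end

section
/- In the block setup, let σ_min(S) = inf{ ‖S·v‖₂ : v ∈ ℝⁿ, ‖v‖₂ = 1 }. If μ₂(F) < 0, then μ₂(F_r) ≤ μ₂(F) · √(1 + σ_min(S)²). -/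
open Matrix

/-- The Euclidean (ℓ²) norm of a real vector. -/
noncomputable def l2norm {k : Type*} [Fintype k] (x : k → ℝ) : ℝ :=
  Real.sqrt (∑ i, x i ^ 2)

/-- The 2-norm matrix measure: `μ₂(M) = sup_{‖x‖₂=1} xᵀ M x`. -/
noncomputable def mu2 {k : Type*} [Fintype k] (M : Matrix k k ℝ) : ℝ :=
  sSup ((fun x => x ⬝ᵥ M.mulVec x) '' {x | l2norm x = 1})

/-- `σ_min(S) = inf { ‖S v‖₂ : ‖v‖₂ = 1 }`. -/
noncomputable def sigmaMin {k l : Type*} [Fintype k] [Fintype l]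
    (S : Matrix k l ℝ) : ℝ :=
  sInf ((fun v => l2norm (S.mulVec v)) '' {v | l2norm v = 1})

lemma aux_l2norm_nonneg {k : Type*} [Fintype k] (x : k → ℝ) : 0 ≤ l2norm x :=
  Real.sqrt_nonneg _

lemma aux_sq_l2norm {k : Type*} [Fintype k] (x : k → ℝ) :
    l2norm x ^ 2 = ∑ i, x i ^ 2 := by
  rw [l2norm, Real.sq_sqrt]; positivity

lemma aux_sum_sq_of_unit {k : Type*} [Fintype k] {x : k → ℝ}
    (hx : l2norm x = 1) : ∑ i, x i ^ 2 = 1 := by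
  have := aux_sq_l2norm x
  rw [hx] at this
  simpa using this.symm

/-- unit vector exists -/
lemma aux_exists_unit (n : ℕ) (hn : 0 < n) : ∃ v : Fin n → ℝ, l2norm v = 1 := by
  haveI : NeZero n := ⟨hn.ne'⟩
  refine ⟨fun i => if i = 0 then 1 else 0, ?_⟩
  rw [l2norm]
  have : ∑ i : Fin n, (if i = 0 then (1:ℝ) else 0) ^ 2 = 1 := by
    rw [Finset.sum_eq_single (0 : Fin n)]
    · simp
    · intro b _ hb; simp [hb]
    · simp
  rw [this, Real.sqrt_one]

/-- the quadratic form bound -/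
lemma aux_quad_le {k : Type*} [Fintype k] (M : Matrix k k ℝ)
    (hB : BddAbove ((fun x => x ⬝ᵥ M.mulVec x) '' {x | l2norm x = 1}))
    (z : k → ℝ) :
    z ⬝ᵥ M.mulVec z ≤ mu2 M * ∑ i, z i ^ 2 := by
  rcases eq_or_ne (∑ i, z i ^ 2) 0 with h0 | h0
  · have hz : z = 0 := by
      funext i
      have hi := (Finset.sum_eq_zero_iff_of_nonneg
        (fun j _ => by positivity)).mp h0 i (Finset.mem_univ i)
      exact pow_eq_zero_iff (n := 2) (by norm_num) |>.mp hi
    simp [hz]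
  · have hpos : 0 < ∑ i, z i ^ 2 := lt_of_le_of_ne (by positivity) (Ne.symm h0)
    set c := l2norm z with hc
    have hcpos : 0 < c := Real.sqrt_pos.mpr hpos
    have hc2 : c ^ 2 = ∑ i, z i ^ 2 := aux_sq_l2norm z
    have hu : l2norm (c⁻¹ • z) = 1 := by
      rw [l2norm]
      have : ∑ i, (c⁻¹ • z) i ^ 2 = c⁻¹ ^ 2 * ∑ i, z i ^ 2 := by
        rw [Finset.mul_sum]
        refine Finset.sum_congr rfl fun i _ => ?_
        simp [mul_pow]
      rw [this, ← hc2, Real.sqrt_mul (by positivity),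
        Real.sqrt_sq (by positivity), Real.sqrt_sq hcpos.le]
      field_simp
    have hmem : (c⁻¹ • z) ⬝ᵥ M.mulVec (c⁻¹ • z) ≤ mu2 M :=
      le_csSup hB ⟨c⁻¹ • z, hu, rfl⟩
    have hexp : (c⁻¹ • z) ⬝ᵥ M.mulVec (c⁻¹ • z)
        = c⁻¹ ^ 2 * (z ⬝ᵥ M.mulVec z) := by
      rw [Matrix.mulVec_smul, smul_dotProduct, dotProduct_smul]
      simp [smul_eq_mul]; ring
    rw [hexp] at hmem
    have := mul_le_mul_of_nonneg_left hmem (le_of_lt (by positivity : (0:ℝ) < c ^ 2))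
    calc z ⬝ᵥ M.mulVec z = c ^ 2 * (c⁻¹ ^ 2 * (z ⬝ᵥ M.mulVec z)) := by
          field_simp
      _ ≤ c ^ 2 * mu2 M := this
      _ = mu2 M * ∑ i, z i ^ 2 := by rw [← hc2]; ring

theorem stmt3 (n m : ℕ) (hn : 0 < n) (hm : 0 < m)
    (B : Matrix (Fin n) (Fin m) ℝ) (C : Matrix (Fin m) (Fin n) ℝ)
    (D : Matrix (Fin m) (Fin m) ℝ) (hD : IsUnit D.det)
    (θ : Matrix (Fin n) (Fin n) ℝ) (hθ : IsUnit θ.det)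
    (ρ : Matrix (Fin m) (Fin m) ℝ) (hρ : IsUnit ρ.det)
    (Q : Matrix (Fin m) (Fin m) ℝ) (R : Matrix (Fin m) (Fin n) ℝ)
    (Fr : Matrix (Fin n) (Fin n) ℝ)
    (S : Matrix (Fin m) (Fin n) ℝ) (hS : S = ρ * D⁻¹ * C * θ⁻¹)
    (F : Matrix (Fin n ⊕ Fin m) (Fin n ⊕ Fin m) ℝ)
    (hFdef : F = Matrix.fromBlocks (Fr + θ * Rᵀ * C * θ⁻¹) (θ * Rᵀ * D * ρ⁻¹)
      (Qᵀ * C * θ⁻¹) (Qᵀ * D * ρ⁻¹))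
    (hneg : mu2 F < 0) :
    mu2 Fr ≤ mu2 F * Real.sqrt (1 + sigmaMin S ^ 2) := by
  -- F's quadratic-form set is bounded above (otherwise mu2 F = 0)
  have hBdd : BddAbove ((fun x => x ⬝ᵥ F.mulVec x) '' {x | l2norm x = 1}) := by
    by_contra h
    rw [mu2, csSup_of_not_bddAbove h, Real.sSup_empty] at hneg
    exact lt_irrefl 0 hneg
  -- key matrix identities
  have h1 : θ * Rᵀ * D * ρ⁻¹ * S = θ * Rᵀ * C * θ⁻¹ := by
    rw [hS]
    simp only [Matrix.mul_assoc]
    rw [Matrix.nonsing_inv_mul_cancel_left ρ _ hρ,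
      Matrix.mul_nonsing_inv_cancel_left D _ hD]
  have h2 : Qᵀ * D * ρ⁻¹ * S = Qᵀ * C * θ⁻¹ := by
    rw [hS]
    simp only [Matrix.mul_assoc]
    rw [Matrix.nonsing_inv_mul_cancel_left ρ _ hρ,
      Matrix.mul_nonsing_inv_cancel_left D _ hD]
  -- σ := sigmaMin S basic facts
  have hσ0 : 0 ≤ sigmaMin S :=
    Real.sInf_nonneg (by rintro x ⟨v, -, rfl⟩; exact aux_l2norm_nonneg _)
  have hσle : ∀ v : Fin n → ℝ, l2norm v = 1 → sigmaMin S ≤ l2norm (S.mulVec v) := by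
    intro v hv
    exact csInf_le ⟨0, by rintro x ⟨w, -, rfl⟩; exact aux_l2norm_nonneg _⟩ ⟨v, hv, rfl⟩
  -- the main bound for each unit vector v
  have key : ∀ v : Fin n → ℝ, l2norm v = 1 →
      v ⬝ᵥ Fr.mulVec v ≤ mu2 F * Real.sqrt (1 + sigmaMin S ^ 2) := by
    intro v hv
    set z : (Fin n ⊕ Fin m) → ℝ := Sum.elim v (-(S.mulVec v)) with hz
    have hzl : z ∘ Sum.inl = v := rfl
    have hzr : z ∘ Sum.inr = -(S.mulVec v) := rfl
    have hFz : F.mulVec z = Sum.elim (Fr.mulVec v) 0 := by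
      rw [hFdef, Matrix.fromBlocks_mulVec, hzl, hzr]
      rw [Matrix.mulVec_neg, Matrix.mulVec_mulVec, h1,
        Matrix.mulVec_neg, Matrix.mulVec_mulVec, h2, Matrix.add_mulVec]
      simp
    have hquad : z ⬝ᵥ F.mulVec z = v ⬝ᵥ Fr.mulVec v := by
      rw [hFz, hz, sumElim_dotProduct_sumElim]
      simp
    have hsum : ∑ i, z i ^ 2 = 1 + ∑ j, (S.mulVec v) j ^ 2 := by
      rw [hz, Fintype.sum_sum_type]
      simp only [Sum.elim_inl, Sum.elim_inr, Pi.neg_apply, neg_sq]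
      rw [aux_sum_sq_of_unit hv]
    have hb := aux_quad_le F hBdd z
    rw [hquad, hsum] at hb
    have hSv2 : ∑ j, (S.mulVec v) j ^ 2 = l2norm (S.mulVec v) ^ 2 :=
      (aux_sq_l2norm _).symm
    rw [hSv2] at hb
    -- now: v ⬝ᵥ Fr v ≤ mu2 F * (1 + ‖Sv‖²) ≤ mu2 F * √(1+σ²)
    refine hb.trans ?_
    have hσSv : sigmaMin S ^ 2 ≤ l2norm (S.mulVec v) ^ 2 :=
      pow_le_pow_left₀ hσ0 (hσle v hv) 2
    have hsq : Real.sqrt (1 + sigmaMin S ^ 2) ≤ 1 + l2norm (S.mulVec v) ^ 2 := by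
      have h1' : Real.sqrt (1 + sigmaMin S ^ 2) ≤ 1 + sigmaMin S ^ 2 := by
        have ht : (1:ℝ) ≤ 1 + sigmaMin S ^ 2 := by linarith [sq_nonneg (sigmaMin S)]
        nlinarith [Real.sq_sqrt (add_nonneg zero_le_one (sq_nonneg (sigmaMin S))),
          Real.sqrt_nonneg (1 + sigmaMin S ^ 2)]
      linarith
    have := mul_le_mul_of_nonpos_left hsq hneg.le
    linarith
  -- conclude via csSup_le
  obtain ⟨v₀, hv₀⟩ := aux_exists_unit n hn
  refine csSup_le ⟨v₀ ⬝ᵥ Fr.mulVec v₀, ⟨v₀, hv₀, rfl⟩⟩ ?_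
  rintro x ⟨v, hv, rfl⟩
  exact key v hv
end

section
/- Let n and m be positive integers, let C be an m×n real matrix, D an invertible m×m real matrix, θ an invertible n×n real matrix, and F_r an n×n real matrix with μ₂(F_r) < 0. Then for every ε > 0 there exist an invertible m×m real matrix ρ, an m×m real matrix Q, and an m×n real matrix R such that the generalized unreduced Jacobian F = [[F_r + θ·Rᵀ·C·θ⁻¹, θ·Rᵀ·D·ρ⁻¹], [Qᵀ·C·θ⁻¹, Qᵀ·D·ρ⁻¹]] satisfies μ₂(F) ≤ μ₂(F_r)/(1+ε). -/
open Matrix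

lemma quad_le_mu2 {k : Type*} [Fintype k] (M : Matrix k k ℝ)
    (h : mu2 M < 0) (u : k → ℝ) :
    u ⬝ᵥ M.mulVec u ≤ mu2 M * ∑ i, u i ^ 2 := by
  have hbdd : BddAbove ((fun x => x ⬝ᵥ M.mulVec x) '' {x | l2norm x = 1}) := by
    by_contra hb
    rw [mu2, Real.sSup_of_not_bddAbove hb] at h
    exact lt_irrefl _ h
  have hsum : (0:ℝ) ≤ ∑ i, u i ^ 2 := Finset.sum_nonneg fun i _ => sq_nonneg _
  rcases eq_or_lt_of_le hsum with h0 | h0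
  · have hu : u = 0 := by
      funext i
      have := (Finset.sum_eq_zero_iff_of_nonneg (fun i _ => sq_nonneg (u i))).mp h0.symm
      have := this i (Finset.mem_univ i)
      exact pow_eq_zero_iff (by norm_num) |>.mp this
    simp [hu, ← h0]
  · set a : ℝ := Real.sqrt (∑ i, u i ^ 2) with ha
    have hapos : 0 < a := Real.sqrt_pos.mpr h0
    have ha2 : a ^ 2 = ∑ i, u i ^ 2 := Real.sq_sqrt hsum
    set w : k → ℝ := a⁻¹ • u with hw
    have hwnorm : l2norm w = 1 := by
      rw [l2norm]
      have : ∑ i, w i ^ 2 = a⁻¹ ^ 2 * ∑ i, u i ^ 2 := by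
        rw [Finset.mul_sum]
        exact Finset.sum_congr rfl fun i _ => by simp [hw]; ring
      rw [this, ← ha2, show a⁻¹ ^ 2 * a ^ 2 = 1 by field_simp]
      exact Real.sqrt_one
    have hmem : w ⬝ᵥ M.mulVec w ∈ (fun x => x ⬝ᵥ M.mulVec x) '' {x | l2norm x = 1} :=
      ⟨w, hwnorm, rfl⟩
    have hle : w ⬝ᵥ M.mulVec w ≤ mu2 M := le_csSup hbdd hmem
    have hquad : w ⬝ᵥ M.mulVec w = a⁻¹ ^ 2 * (u ⬝ᵥ M.mulVec u) := by
      rw [hw, smul_dotProduct, mulVec_smul, dotProduct_smul]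
      simp [smul_eq_mul]; ring
    rw [hquad] at hle
    have ha2pos : 0 < a ^ 2 := by positivity
    have := mul_le_mul_of_nonneg_left hle ha2pos.le
    rw [← mul_assoc] at this
    have hcancel : a ^ 2 * a⁻¹ ^ 2 = 1 := by
      field_simp
    rw [hcancel, one_mul] at this
    calc u ⬝ᵥ M.mulVec u ≤ a ^ 2 * mu2 M := this
    _ = mu2 M * ∑ i, u i ^ 2 := by rw [mul_comm, ha2]

set_option maxHeartbeats 1000000 in
theorem stmt4 (n m : ℕ) (hn : 0 < n) (hm : 0 < m)
    (C : Matrix (Fin m) (Fin n) ℝ)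
    (D : Matrix (Fin m) (Fin m) ℝ) (hD : IsUnit D.det)
    (θ : Matrix (Fin n) (Fin n) ℝ) (hθ : IsUnit θ.det)
    (Fr : Matrix (Fin n) (Fin n) ℝ) (hFr : mu2 Fr < 0)
    (ε : ℝ) (hε : 0 < ε) :
    ∃ (ρ : Matrix (Fin m) (Fin m) ℝ) (Q : Matrix (Fin m) (Fin m) ℝ)
      (R : Matrix (Fin m) (Fin n) ℝ), IsUnit ρ.det ∧
      mu2 (Matrix.fromBlocks (Fr + θ * Rᵀ * C * θ⁻¹) (θ * Rᵀ * D * ρ⁻¹)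
        (Qᵀ * C * θ⁻¹) (Qᵀ * D * ρ⁻¹)) ≤ mu2 Fr / (1 + ε) := by
  set μ := mu2 Fr with hμ
  have h1ε : (0:ℝ) < 1 + ε := by linarith
  set δ : ℝ := -μ * ε / (1 + ε) with hδdef
  have hδ : 0 < δ := div_pos (mul_pos (by linarith) hε) h1ε
  set B : Matrix (Fin m) (Fin n) ℝ := C * θ⁻¹ with hBdef
  set b : ℝ := ∑ i, ∑ j, |B i j| with hbdef
  have hbnn : 0 ≤ b := Finset.sum_nonneg fun i _ => Finset.sum_nonneg fun j _ => abs_nonneg _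
  set s : ℝ := μ / (1 + ε) - b ^ 2 / (4 * δ) with hsdef
  have hμε : μ / (1 + ε) < 0 := div_neg_of_neg_of_pos hFr h1ε
  have hsneg : s < 0 := by
    have : 0 ≤ b ^ 2 / (4 * δ) := by positivity
    rw [hsdef]; linarith
  have hsne : s ≠ 0 := ne_of_lt hsneg
  refine ⟨s⁻¹ • D, 1, 0, ?_, ?_⟩
  · rw [Matrix.det_smul]
    exact ((isUnit_iff_ne_zero.mpr (inv_ne_zero hsne)).pow _).mul hD
  · have hρinv : (s⁻¹ • D)⁻¹ = s • D⁻¹ := by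
      apply inv_eq_right_inv
      rw [smul_mul_assoc, mul_smul_comm, smul_smul, inv_mul_cancel₀ hsne, one_smul,
        Matrix.mul_nonsing_inv D hD]
    have hblocks : Matrix.fromBlocks (Fr + θ * (0:Matrix (Fin m) (Fin n) ℝ)ᵀ * C * θ⁻¹)
        (θ * (0:Matrix (Fin m) (Fin n) ℝ)ᵀ * D * (s⁻¹ • D)⁻¹)
        ((1:Matrix (Fin m) (Fin m) ℝ)ᵀ * C * θ⁻¹) ((1:Matrix (Fin m) (Fin m) ℝ)ᵀ * D * (s⁻¹ • D)⁻¹)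
        = Matrix.fromBlocks Fr 0 B (s • (1:Matrix (Fin m) (Fin m) ℝ)) := by
      rw [hρinv]
      congr 1 <;> simp [hBdef]
      rw [Matrix.mul_nonsing_inv D hD]
    rw [hblocks]
    -- key bound on the quadratic form
    have key : ∀ x : Fin n ⊕ Fin m → ℝ, l2norm x = 1 →
        x ⬝ᵥ (Matrix.fromBlocks Fr 0 B (s • (1:Matrix (Fin m) (Fin m) ℝ))).mulVec x
          ≤ μ / (1 + ε) := by
      intro x hx
      set u : Fin n → ℝ := x ∘ Sum.inl with hu
      set v : Fin m → ℝ := x ∘ Sum.inr with hv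
      have hx' : x = Sum.elim u v := (Sum.elim_comp_inl_inr x).symm
      have hform : x ⬝ᵥ (Matrix.fromBlocks Fr 0 B (s • (1:Matrix (Fin m) (Fin m) ℝ))).mulVec x
          = u ⬝ᵥ Fr.mulVec u + v ⬝ᵥ B.mulVec u + s * ∑ j, v j ^ 2 := by
        rw [hx', fromBlocks_mulVec, sumElim_dotProduct_sumElim]
        simp only [Sum.elim_comp_inl, Sum.elim_comp_inr]
        rw [Matrix.zero_mulVec, add_zero, Matrix.smul_mulVec, Matrix.one_mulVec,
          dotProduct_add, dotProduct_smul, smul_eq_mul,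
          show v ⬝ᵥ v = ∑ j, v j ^ 2 by simp [dotProduct, sq]]
        ring
      set a : ℝ := l2norm u with ha
      set c : ℝ := l2norm v with hc
      have hsumu : (0:ℝ) ≤ ∑ i, u i ^ 2 := Finset.sum_nonneg fun i _ => sq_nonneg _
      have hsumv : (0:ℝ) ≤ ∑ j, v j ^ 2 := Finset.sum_nonneg fun j _ => sq_nonneg _
      have ha2 : a ^ 2 = ∑ i, u i ^ 2 := Real.sq_sqrt hsumu
      have hc2 : c ^ 2 = ∑ j, v j ^ 2 := Real.sq_sqrt hsumv
      have hann : 0 ≤ a := Real.sqrt_nonneg _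
      have hcnn : 0 ≤ c := Real.sqrt_nonneg _
      have habc : a ^ 2 + c ^ 2 = 1 := by
        rw [ha2, hc2]
        have := hx
        rw [l2norm] at this
        have h1 : ∑ i, x i ^ 2 = 1 := by
          have hsx : (0:ℝ) ≤ ∑ i, x i ^ 2 := Finset.sum_nonneg fun i _ => sq_nonneg _
          nlinarith [Real.sq_sqrt hsx]
        rw [Fintype.sum_sum_type] at h1
        exact h1
      have hua : ∀ i, |u i| ≤ a := by
        intro i
        rw [ha, l2norm, ← Real.sqrt_sq_eq_abs]
        apply Real.sqrt_le_sqrt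
        exact Finset.single_le_sum (fun j (_ : j ∈ Finset.univ) => sq_nonneg (u j))
          (Finset.mem_univ i)
      have hvc : ∀ j, |v j| ≤ c := by
        intro j
        rw [hc, l2norm, ← Real.sqrt_sq_eq_abs]
        apply Real.sqrt_le_sqrt
        exact Finset.single_le_sum (fun i (_ : i ∈ Finset.univ) => sq_nonneg (v i))
          (Finset.mem_univ j)
      have h1 : u ⬝ᵥ Fr.mulVec u ≤ μ * a ^ 2 := by
        rw [ha2]; exact quad_le_mu2 Fr hFr u
      have h2 : v ⬝ᵥ B.mulVec u ≤ b * (a * c) := by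
        calc v ⬝ᵥ B.mulVec u = ∑ j, ∑ i, v j * (B j i * u i) := by
              simp [dotProduct, mulVec, Finset.mul_sum]
        _ ≤ ∑ j, ∑ i, |B j i| * (a * c) := by
              apply Finset.sum_le_sum; intro j _
              apply Finset.sum_le_sum; intro i _
              calc v j * (B j i * u i) ≤ |v j * (B j i * u i)| := le_abs_self _
              _ = |B j i| * (|u i| * |v j|) := by rw [abs_mul, abs_mul]; ring
              _ ≤ |B j i| * (a * c) := by
                  apply mul_le_mul_of_nonneg_left _ (abs_nonneg _)
                  exact mul_le_mul (hua i) (hvc j) (abs_nonneg _) hann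
        _ = b * (a * c) := by
              rw [hbdef, Finset.sum_mul]
              exact Finset.sum_congr rfl fun j _ => by rw [Finset.sum_mul]
      have h3 : b * (a * c) ≤ δ * a ^ 2 + b ^ 2 / (4 * δ) * c ^ 2 := by
        have hbd : b ^ 2 / (4 * δ) * (4 * δ) = b ^ 2 := by field_simp
        nlinarith [sq_nonneg (2 * δ * a - b * c), hδ]
      have hμδ : μ + δ = μ / (1 + ε) := by
        rw [hδdef]; field_simp; ring
      have hsexp : s * c ^ 2 = μ / (1 + ε) * c ^ 2 - b ^ 2 / (4 * δ) * c ^ 2 := by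
        rw [hsdef]; ring
      have hμδa : μ * a ^ 2 + δ * a ^ 2 = μ / (1 + ε) * a ^ 2 := by
        rw [← add_mul, hμδ]
      have hM : μ / (1 + ε) * a ^ 2 + μ / (1 + ε) * c ^ 2 = μ / (1 + ε) := by
        rw [← mul_add, habc, mul_one]
      rw [hform, ← hc2]
      linarith [h1, h2, h3, hsexp, hμδa, hM]
    -- conclude
    rw [mu2]
    apply csSup_le
    · apply Set.Nonempty.image
      refine ⟨(Pi.single (Sum.inl ⟨0, hn⟩) (1:ℝ) : Fin n ⊕ Fin m → ℝ), ?_⟩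
      rw [Set.mem_setOf_eq, l2norm]
      have h1 : ∑ i, (Pi.single (Sum.inl ⟨0, hn⟩) (1:ℝ) : Fin n ⊕ Fin m → ℝ) i ^ 2 = 1 := by
        rw [Finset.sum_eq_single (Sum.inl ⟨0, hn⟩)]
        · simp
        · intro i _ hi; simp [Pi.single_apply, hi]
        · intro h; exact absurd (Finset.mem_univ _) h
      rw [h1, Real.sqrt_one]
    · rintro y ⟨x, hx, rfl⟩
      exact key x hx
end

section
/- Let n and m be positive integers, let C be an m×n real matrix, D an invertible m×m real matrix, θ an invertible n×n real matrix, and F_r an n×n real matrix with μ∞(F_r) < 0. Then for every ε > 0 there exist an invertible m×m real matrix ρ, an m×m real matrix Q, and an m×n real matrix R such that the generalized unreduced Jacobian F = [[F_r + θ·Rᵀ·C·θ⁻¹, θ·Rᵀ·D·ρ⁻¹], [Qᵀ·C·θ⁻¹, Qᵀ·D·ρ⁻¹]] satisfies μ∞(F) ≤ μ∞(F_r)·(1 − ε). -/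
/-!
Take `R = 0`, `Q = 1` and `ρ = c⁻¹ • D` with a scalar `c < 0`. The Jacobian becomes block lower
triangular, `[[F_r, 0], [C θ⁻¹, c • 1]]`: its first `n` rows have exactly the row measures of `F_r`,
and its last `m` rows have measure `∑ⱼ |(C θ⁻¹)ᵢⱼ| + c`, which is at most `μ∞(F_r)` once `c` is
negative enough, e.g. `c = μ∞(F_r) - ∑ᵢⱼ |(C θ⁻¹)ᵢⱼ|`. Hence `μ∞(F) ≤ μ∞(F_r) ≤ μ∞(F_r) (1 - ε)`,
the last step because `μ∞(F_r) < 0`.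
-/

open Matrix Finset

/-- The ∞-norm matrix measure: `μ∞(M) = max_i ( M i i + ∑_{j ≠ i} |M i j| )`. -/
noncomputable def muInfty {k : Type*} [Fintype k] [DecidableEq k]
    (M : Matrix k k ℝ) : ℝ :=
  ⨆ i, (M i i + ∑ j ∈ Finset.univ.erase i, |M i j|)

section RowMeasure

variable {k l : Type*} [Fintype k] [DecidableEq k] [Fintype l] [DecidableEq l]

def rowMeasure (M : Matrix k k ℝ) (i : k) : ℝ :=
  M i i + ∑ j ∈ univ.erase i, |M i j|

lemma rowMeasure_eq_sum_sub (M : Matrix k k ℝ) (i : k) :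
    rowMeasure M i = M i i + ∑ j, |M i j| - |M i i| := by
  rw [rowMeasure, sum_erase_eq_sub (mem_univ i), add_sub_assoc]

lemma rowMeasure_le_muInfty (M : Matrix k k ℝ) (i : k) : rowMeasure M i ≤ muInfty M :=
  le_ciSup (Set.finite_range _).bddAbove i

lemma muInfty_le [Nonempty k] {M : Matrix k k ℝ} {b : ℝ} (h : ∀ i, rowMeasure M i ≤ b) :
    muInfty M ≤ b :=
  ciSup_le h

lemma rowMeasure_smul_one (c : ℝ) (i : k) : rowMeasure (c • (1 : Matrix k k ℝ)) i = c := by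
  rw [rowMeasure, sum_eq_zero fun j hj => by simp [one_apply_ne' (ne_of_mem_erase hj)]]
  simp

lemma rowMeasure_fromBlocks_inl (A : Matrix k k ℝ) (B : Matrix k l ℝ) (C : Matrix l k ℝ)
    (D : Matrix l l ℝ) (i : k) :
    rowMeasure (fromBlocks A B C D) (.inl i) = rowMeasure A i + ∑ j, |B i j| := by
  simp only [rowMeasure_eq_sum_sub, Fintype.sum_sum_type, fromBlocks_apply₁₁, fromBlocks_apply₁₂]
  ring

lemma rowMeasure_fromBlocks_inr (A : Matrix k k ℝ) (B : Matrix k l ℝ) (C : Matrix l k ℝ)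
    (D : Matrix l l ℝ) (i : l) :
    rowMeasure (fromBlocks A B C D) (.inr i) = ∑ j, |C i j| + rowMeasure D i := by
  simp only [rowMeasure_eq_sum_sub, Fintype.sum_sum_type, fromBlocks_apply₂₁, fromBlocks_apply₂₂]
  ring

lemma muInfty_fromBlocks_zero_smul_one_le [Nonempty l] (A : Matrix k k ℝ) (C : Matrix l k ℝ)
    {c : ℝ} (hc : ∀ i, ∑ j, |C i j| + c ≤ muInfty A) :
    muInfty (fromBlocks A 0 C (c • 1)) ≤ muInfty A := by
  apply muInfty_le
  rintro (i | i)
  · simpa [rowMeasure_fromBlocks_inl] using rowMeasure_le_muInfty A i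
  · simpa [rowMeasure_fromBlocks_inr, rowMeasure_smul_one] using hc i

end RowMeasure

lemma sum_abs_row_le_sum_abs {k l : Type*} [Fintype k] [Fintype l] (A : Matrix k l ℝ) (i : k) :
    ∑ j, |A i j| ≤ ∑ i, ∑ j, |A i j| :=
  single_le_sum (f := fun i => ∑ j, |A i j|) (fun _ _ => sum_nonneg fun _ _ => abs_nonneg _)
    (mem_univ i)

theorem stmt6_general (n m : ℕ) (hm : 0 < m)
    (C : Matrix (Fin m) (Fin n) ℝ)
    (D : Matrix (Fin m) (Fin m) ℝ) (hD : IsUnit D.det)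
    (θ : Matrix (Fin n) (Fin n) ℝ)
    (Fr : Matrix (Fin n) (Fin n) ℝ) (hFr : muInfty Fr < 0)
    (ε : ℝ) (hε : 0 < ε) :
    ∃ (ρ : Matrix (Fin m) (Fin m) ℝ) (Q : Matrix (Fin m) (Fin m) ℝ)
      (R : Matrix (Fin m) (Fin n) ℝ), IsUnit ρ.det ∧
      muInfty (Matrix.fromBlocks (Fr + θ * Rᵀ * C * θ⁻¹) (θ * Rᵀ * D * ρ⁻¹)
        (Qᵀ * C * θ⁻¹) (Qᵀ * D * ρ⁻¹)) ≤ muInfty Fr * (1 - ε) := by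
  have : Nonempty (Fin m) := ⟨⟨0, hm⟩⟩
  set A := C * θ⁻¹
  set c := muInfty Fr - ∑ i, ∑ j, |A i j|
  have hc : c ≠ 0 := by
    have : 0 ≤ ∑ i, ∑ j, |A i j| := by positivity
    exact (sub_neg.mpr (hFr.trans_le this)).ne
  have hD_mul_inv : D * (c⁻¹ • D)⁻¹ = c • 1 := by
    have hinv : (c⁻¹ • D)⁻¹ = c • D⁻¹ := inv_eq_right_inv <| by
      rw [smul_mul_smul_comm, mul_nonsing_inv D hD, inv_mul_cancel₀ hc, one_smul]
    rw [hinv, Matrix.mul_smul, mul_nonsing_inv D hD]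
  refine ⟨c⁻¹ • D, 1, 0, ?_, ?_⟩
  · simpa [det_smul, hc] using hD
  · simp only [transpose_zero, transpose_one, Matrix.mul_zero, Matrix.zero_mul, add_zero,
      Matrix.one_mul, hD_mul_inv]
    calc muInfty (fromBlocks Fr 0 A (c • 1))
        ≤ muInfty Fr := muInfty_fromBlocks_zero_smul_one_le Fr A fun i => by
          linarith [sum_abs_row_le_sum_abs A i]
      _ ≤ muInfty Fr * (1 - ε) := by nlinarith

theorem stmt6 (n m : ℕ) (hn : 0 < n) (hm : 0 < m)
    (C : Matrix (Fin m) (Fin n) ℝ)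
    (D : Matrix (Fin m) (Fin m) ℝ) (hD : IsUnit D.det)
    (θ : Matrix (Fin n) (Fin n) ℝ) (hθ : IsUnit θ.det)
    (Fr : Matrix (Fin n) (Fin n) ℝ) (hFr : muInfty Fr < 0)
    (ε : ℝ) (hε : 0 < ε) :
    ∃ (ρ : Matrix (Fin m) (Fin m) ℝ) (Q : Matrix (Fin m) (Fin m) ℝ)
      (R : Matrix (Fin m) (Fin n) ℝ), IsUnit ρ.det ∧
      muInfty (Matrix.fromBlocks (Fr + θ * Rᵀ * C * θ⁻¹) (θ * Rᵀ * D * ρ⁻¹)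
        (Qᵀ * C * θ⁻¹) (Qᵀ * D * ρ⁻¹)) ≤ muInfty Fr * (1 - ε) :=
  stmt6_general n m hm C D hD θ Fr hFr ε hε
end

section
/- Let n and m be positive integers, let C be an m×n real matrix, D an invertible m×m real matrix, θ an invertible n×n real matrix, and F_r an n×n real matrix with μ₁(F_r) < 0. Then for every ε > 0 there exist an invertible m×m real matrix ρ, an m×m real matrix Q, and an m×n real matrix R such that the generalized unreduced Jacobian F = [[F_r + θ·Rᵀ·C·θ⁻¹, θ·Rᵀ·D·ρ⁻¹], [Qᵀ·C·θ⁻¹, Qᵀ·D·ρ⁻¹]] satisfies μ₁(F) ≤ μ₁(F_r)·(1 − ε). -/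
open Matrix Finset

/-!
Take `R = 0`, so that `F` is block lower triangular, and `Q = δ • 1`, `ρ = (δ / c) • D`, so that
its lower blocks become `δ • (C * θ⁻¹)` and `c • 1`. A right column of `F` then has measure `c`,
a left one at most `μ₁(F_r) + δ * ∑ |(C * θ⁻¹) i j|`. Any `c < 0` below `μ₁(F_r) * (1 - ε)` and any
`δ > 0` small enough for the perturbation to stay below `-ε * μ₁(F_r)` do the job.
-/

/-- The 1-norm matrix measure: `μ₁(M) = max_j ( M j j + ∑_{i ≠ j} |M i j| )`. -/
noncomputable def muOne {k : Type*} [Fintype k] [DecidableEq k]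
    (M : Matrix k k ℝ) : ℝ :=
  ⨆ j, (M j j + ∑ i ∈ Finset.univ.erase j, |M i j|)

section

variable {k l : Type*} [Fintype k] [DecidableEq k] [Fintype l] [DecidableEq l]

def colMeasure (M : Matrix k k ℝ) (j : k) : ℝ :=
  M j j + ∑ i ∈ univ.erase j, |M i j|

lemma muOne_le_of_forall_colMeasure_le [Nonempty k] {M : Matrix k k ℝ} {b : ℝ}
    (h : ∀ j, colMeasure M j ≤ b) : muOne M ≤ b :=
  ciSup_le h

lemma colMeasure_le_muOne (M : Matrix k k ℝ) (j : k) : colMeasure M j ≤ muOne M :=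
  le_ciSup (Set.finite_range _).bddAbove j

lemma nonempty_of_muOne_neg {M : Matrix k k ℝ} (h : muOne M < 0) : Nonempty k := by
  by_contra hk
  rw [not_nonempty_iff] at hk
  simp [muOne] at h

lemma colMeasure_eq (M : Matrix k k ℝ) (j : k) :
    colMeasure M j = M j j - |M j j| + ∑ i, |M i j| := by
  rw [colMeasure, sum_erase_eq_sub (mem_univ j)]
  ring

lemma colMeasure_fromBlocks_inl (A : Matrix k k ℝ) (B : Matrix k l ℝ) (C : Matrix l k ℝ)
    (D : Matrix l l ℝ) (j : k) :
    colMeasure (fromBlocks A B C D) (Sum.inl j) = colMeasure A j + ∑ i, |C i j| := by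
  simp only [colMeasure_eq, Fintype.sum_sum_type, fromBlocks_apply₁₁, fromBlocks_apply₂₁]
  ring

lemma colMeasure_fromBlocks_inr (A : Matrix k k ℝ) (B : Matrix k l ℝ) (C : Matrix l k ℝ)
    (D : Matrix l l ℝ) (j : l) :
    colMeasure (fromBlocks A B C D) (Sum.inr j) = colMeasure D j + ∑ i, |B i j| := by
  simp only [colMeasure_eq, Fintype.sum_sum_type, fromBlocks_apply₁₂, fromBlocks_apply₂₂]
  ring

lemma colMeasure_smul_one (c : ℝ) (j : k) : colMeasure (c • (1 : Matrix k k ℝ)) j = c := by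
  rw [colMeasure, sum_eq_zero fun i hi => by simp [one_apply_ne (ne_of_mem_erase hi)]]
  simp

lemma muOne_fromBlocks_zero_smul_one_le [Nonempty k] (A : Matrix k k ℝ) (B : Matrix l k ℝ)
    (c : ℝ) :
    muOne (fromBlocks A 0 B (c • 1)) ≤ max (muOne A + ∑ j, ∑ i, |B i j|) c := by
  refine muOne_le_of_forall_colMeasure_le ?_
  rintro (j | j)
  · rw [colMeasure_fromBlocks_inl]
    have hcol : ∑ i, |B i j| ≤ ∑ j, ∑ i, |B i j| :=
      single_le_sum (f := fun j => ∑ i, |B i j|) (fun _ _ => by positivity) (mem_univ j)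
    exact le_max_of_le_left (add_le_add (colMeasure_le_muOne A j) hcol)
  · simp [colMeasure_fromBlocks_inr, colMeasure_smul_one]

end

lemma sum_sum_abs_smul {ι κ : Type*} [Fintype ι] [Fintype κ] {δ : ℝ} (hδ : 0 ≤ δ)
    (B : Matrix ι κ ℝ) : ∑ j, ∑ i, |(δ • B) i j| = δ * ∑ j, ∑ i, |B i j| := by
  simp only [Matrix.smul_apply, smul_eq_mul, abs_mul, abs_of_nonneg hδ, mul_sum]

theorem stmt8_general (n m : ℕ)
    (C : Matrix (Fin m) (Fin n) ℝ)
    (D : Matrix (Fin m) (Fin m) ℝ) (hD : IsUnit D.det)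
    (θ : Matrix (Fin n) (Fin n) ℝ)
    (Fr : Matrix (Fin n) (Fin n) ℝ) (hFr : muOne Fr < 0)
    (ε : ℝ) (hε : 0 < ε) :
    ∃ (ρ : Matrix (Fin m) (Fin m) ℝ) (Q : Matrix (Fin m) (Fin m) ℝ)
      (R : Matrix (Fin m) (Fin n) ℝ), IsUnit ρ.det ∧
      muOne (Matrix.fromBlocks (Fr + θ * Rᵀ * C * θ⁻¹) (θ * Rᵀ * D * ρ⁻¹)
        (Qᵀ * C * θ⁻¹) (Qᵀ * D * ρ⁻¹)) ≤ muOne Fr * (1 - ε) := by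
  have := nonempty_of_muOne_neg hFr
  obtain ⟨δ, hδ, hδβ⟩ := exists_pos_mul_lt (neg_pos.2 (mul_neg_of_pos_of_neg hε hFr))
    (∑ j, ∑ i, |(C * θ⁻¹) i j|)
  set c := min (muOne Fr * (1 - ε)) (-1)
  have hc : c ≠ 0 := (min_le_right _ _).trans_lt (by norm_num) |>.ne
  have hρ : IsUnit (δ / c) := (div_ne_zero hδ.ne' hc).isUnit
  refine ⟨(δ / c) • D, δ • 1, 0, by simpa [det_smul] using (hρ.pow _).mul hD, ?_⟩
  have hF : fromBlocks (Fr + θ * (0 : Matrix (Fin m) (Fin n) ℝ)ᵀ * C * θ⁻¹)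
      (θ * (0 : Matrix (Fin m) (Fin n) ℝ)ᵀ * D * ((δ / c) • D)⁻¹)
      ((δ • (1 : Matrix (Fin m) (Fin m) ℝ))ᵀ * C * θ⁻¹)
      ((δ • (1 : Matrix (Fin m) (Fin m) ℝ))ᵀ * D * ((δ / c) • D)⁻¹)
      = fromBlocks Fr 0 (δ • (C * θ⁻¹)) (c • 1) := by
    have hρinv : ((δ / c) • D)⁻¹ = (c / δ) • D⁻¹ :=
      inv_eq_left_inv (by simp [smul_smul, nonsing_inv_mul D hD, hδ.ne', hc])
    simp [hρinv, mul_nonsing_inv D hD, smul_smul, hδ.ne']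
  rw [hF]
  refine (muOne_fromBlocks_zero_smul_one_le _ _ _).trans (max_le ?_ (min_le_left _ _))
  rw [sum_sum_abs_smul hδ.le]
  linarith

theorem stmt8 (n m : ℕ) (hn : 0 < n) (hm : 0 < m)
    (C : Matrix (Fin m) (Fin n) ℝ)
    (D : Matrix (Fin m) (Fin m) ℝ) (hD : IsUnit D.det)
    (θ : Matrix (Fin n) (Fin n) ℝ) (hθ : IsUnit θ.det)
    (Fr : Matrix (Fin n) (Fin n) ℝ) (hFr : muOne Fr < 0)
    (ε : ℝ) (hε : 0 < ε) :
    ∃ (ρ : Matrix (Fin m) (Fin m) ℝ) (Q : Matrix (Fin m) (Fin m) ℝ)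
      (R : Matrix (Fin m) (Fin n) ℝ), IsUnit ρ.det ∧
      muOne (Matrix.fromBlocks (Fr + θ * Rᵀ * C * θ⁻¹) (θ * Rᵀ * D * ρ⁻¹)
        (Qᵀ * C * θ⁻¹) (Qᵀ * D * ρ⁻¹)) ≤ muOne Fr * (1 - ε) :=
  stmt8_general n m C D hD θ Fr hFr ε hε
end

section
/- Let n and m be positive integers, and fix real matrices A (n×n), B (n×m), C (m×n), D (m×m) with D invertible, an invertible n×n real matrix θ, and arbitrary real matrices R̃ (m×n) and Q̃ (m×m). Set P = θᵀ·θ, ρ = I_m, R = D⁻ᵀ·Bᵀ + R̃·P⁻¹, Q = Q̃, F_r = θ·(A − B·D⁻¹·C)·θ⁻¹, and let F be the corresponding generalized unreduced Jacobian. Let J = [[A, B], [C, D]] (the full Jacobian) and Z = [[P, 0], [R̃, Q̃]] (a lower block-triangular auxiliary matrix), both (n+m)×(n+m). Then for all δx ∈ ℝⁿ and δy ∈ ℝᵐ, with w = (θ·δx, δy) and z = (δx, δy), one has wᵀ·F·w = zᵀ·Zᵀ·J·z. -/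
open Matrix

theorem stmt10 (n m : ℕ) (hn : 0 < n) (hm : 0 < m)
    (A : Matrix (Fin n) (Fin n) ℝ) (B : Matrix (Fin n) (Fin m) ℝ)
    (C : Matrix (Fin m) (Fin n) ℝ)
    (D : Matrix (Fin m) (Fin m) ℝ) (hD : IsUnit D.det)
    (θ : Matrix (Fin n) (Fin n) ℝ) (hθ : IsUnit θ.det)
    (Rtil : Matrix (Fin m) (Fin n) ℝ) (Qtil : Matrix (Fin m) (Fin m) ℝ)
    (P : Matrix (Fin n) (Fin n) ℝ) (hP : P = θᵀ * θ)
    (ρ : Matrix (Fin m) (Fin m) ℝ) (hρ : ρ = 1)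
    (R : Matrix (Fin m) (Fin n) ℝ) (hR : R = (D⁻¹)ᵀ * Bᵀ + Rtil * P⁻¹)
    (Q : Matrix (Fin m) (Fin m) ℝ) (hQ : Q = Qtil)
    (Fr : Matrix (Fin n) (Fin n) ℝ) (hFr : Fr = θ * (A - B * D⁻¹ * C) * θ⁻¹)
    (F : Matrix (Fin n ⊕ Fin m) (Fin n ⊕ Fin m) ℝ)
    (hF : F = Matrix.fromBlocks (Fr + θ * Rᵀ * C * θ⁻¹) (θ * Rᵀ * D * ρ⁻¹)
      (Qᵀ * C * θ⁻¹) (Qᵀ * D * ρ⁻¹))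
    (J : Matrix (Fin n ⊕ Fin m) (Fin n ⊕ Fin m) ℝ)
    (hJ : J = Matrix.fromBlocks A B C D)
    (Z : Matrix (Fin n ⊕ Fin m) (Fin n ⊕ Fin m) ℝ)
    (hZ : Z = Matrix.fromBlocks P 0 Rtil Qtil)
    (δx : Fin n → ℝ) (δy : Fin m → ℝ) :
    Sum.elim (θ.mulVec δx) δy ⬝ᵥ F.mulVec (Sum.elim (θ.mulVec δx) δy) =
      Sum.elim δx δy ⬝ᵥ (Zᵀ * J).mulVec (Sum.elim δx δy) := by
  have hPdet : IsUnit P.det := by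
    rw [hP, det_mul, det_transpose]; exact hθ.mul hθ
  have hPt : Pᵀ = P := by rw [hP, transpose_mul, transpose_transpose]
  set T : Matrix (Fin n ⊕ Fin m) (Fin n ⊕ Fin m) ℝ :=
    Matrix.fromBlocks θ 0 0 1 with hT
  have hw : Sum.elim (θ.mulVec δx) δy = T.mulVec (Sum.elim δx δy) := by
    rw [hT, fromBlocks_mulVec]
    simp
  rw [hw]
  have hstep : (T.mulVec (Sum.elim δx δy)) ⬝ᵥ F.mulVec (T.mulVec (Sum.elim δx δy))
      = (Sum.elim δx δy) ⬝ᵥ (Tᵀ * F * T).mulVec (Sum.elim δx δy) := by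
    rw [← vecMul_transpose, dotProduct_mulVec, vecMul_vecMul, ← dotProduct_mulVec,
      vecMul_transpose, mulVec_mulVec, Matrix.mul_assoc]
  rw [hstep]
  congr 1
  -- key block identity
  have hTt : Tᵀ = Matrix.fromBlocks θᵀ 0 0 1 := by
    rw [hT, fromBlocks_transpose]; simp
  rw [hF, hJ, hZ, hTt, hT, fromBlocks_transpose, fromBlocks_multiply, fromBlocks_multiply,
    fromBlocks_multiply]
  rw [hP] at hPdet hPt
  have hc : ∀ (k : Type) [Fintype k] (X : Matrix (Fin n) k ℝ),
      θᵀ * (θ * ((θᵀ * θ)⁻¹ * X)) = X := by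
    intro k _ X
    rw [← Matrix.mul_assoc θᵀ θ, mul_nonsing_inv_cancel_left _ _ hPdet]
  congr 1 <;>
  · rw [hFr, hR, hρ, hQ, hP]
    simp only [transpose_add, transpose_mul, transpose_transpose, transpose_zero,
      transpose_nonsing_inv, hPt]
    simp [Matrix.mul_assoc, Matrix.add_mul, Matrix.mul_add, Matrix.sub_mul, Matrix.mul_sub,
      nonsing_inv_mul_cancel_left _ _ hθ, mul_nonsing_inv_cancel_left,
      Matrix.nonsing_inv_mul _ hθ, Matrix.nonsing_inv_mul _ hD,
      nonsing_inv_mul_cancel_left _ _ hD, nonsing_inv_mul_cancel_left _ _ hPdet,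
      mul_nonsing_inv_cancel_left _ _ hPdet, hc,
      show ∀ (a b c : Matrix (Fin n) (Fin n) ℝ), a - b + (b + c) = a + c by
        intro a b c; abel]
end
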